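/- arXiv:1804.03556 — 7 statements merged into one kernel-verified Lean document; each statement's English description precedes it below -/
import Mathlib

section
/- If two SL-structures over the same heap are (X,n)-equivalent (same heap, stores agree on equalities among X, stores agree on X-variables mapped into the heap's elements, and both universes have at least n+|X| locations outside the heap's elements) with n ≥ 1, and e is any location of the first universe, then one can choose a location e' in the second universe such that the extended structures (with a fresh variable x mapped to e and e' respectively) are (X ∪ {x}, n−1)-equivalent. -/
/- Heaps with k selectors over a location type L -/
def hDom {L : Type} {k : ℕ} (h : L → Option (Fin k → L)) : Set L := {l | h l ≠ none}
def hImg {L : Type} {k : ℕ} (h : L → Option (Fin k → L)) : Set L :=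
  {l | ∃ l' v, h l' = some v ∧ ∃ i, v i = l}
def hElem {L : Type} {k : ℕ} (h : L → Option (Fin k → L)) : Set L := hDom h ∪ hImg h

/-- (X,n)-equivalence of two SL-structures (U,s,h) and (U',s',h'). -/
def SLEquiv {L : Type} {k : ℕ} (X : Set ℕ) (n : ℕ)
    (U U' : Set L) (s s' : ℕ → L) (h h' : L → Option (Fin k → L)) : Prop :=
  h = h' ∧
  (∀ x ∈ X, ∀ y ∈ X, (s x = s y ↔ s' x = s' y)) ∧
  (∀ x ∈ X, (s x ∈ hElem h ∨ s' x ∈ hElem h) → s x = s' x) ∧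
  (n + X.ncard ≤ (U \ hElem h).ncard ∧ n + X.ncard ≤ (U' \ hElem h).ncard)

/-- extension of (X,n)-equivalent structures by one location. -/
theorem equiv_extension {L : Type} {k n : ℕ} (X : Set ℕ) (hX : X.Finite)
    (x : ℕ) (hx : x ∉ X)
    (U U' : Set L) (s s' : ℕ → L) (h h' : L → Option (Fin k → L))
    (hfin : (hDom h).Finite)
    (hwf : hElem h ⊆ U ∩ U')
    (hsU : ∀ y, s y ∈ U) (hs'U : ∀ y, s' y ∈ U')
    (hn : 1 ≤ n)
    (heq : SLEquiv X n U U' s s' h h')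
    (e : L) (he : e ∈ U) :
    ∃ e' ∈ U', SLEquiv (X ∪ {x}) (n - 1) U U'
      (Function.update s x e) (Function.update s' x e') h h' := by

  obtain ⟨hh, heqX, helem, hcard, hcard'⟩ := heq
  subst hh
  have hcardX : (X ∪ {x}).ncard = X.ncard + 1 := by
    rw [Set.union_singleton, Set.ncard_insert_of_notMem hx hX]
  have key : ∀ e' ∈ U', (∀ a ∈ X, (s a = e ↔ s' a = e')) →
      ((e ∈ hElem h ∨ e' ∈ hElem h) → e = e') →
      SLEquiv (X ∪ {x}) (n - 1) U U'
        (Function.update s x e) (Function.update s' x e') h h := by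
    intro e' he' P1 P2
    refine ⟨rfl, ?_, ?_, ?_, ?_⟩
    · intro a ha b hb
      rcases ha with ha | ha
      · have hax : a ≠ x := fun hax => hx (hax ▸ ha)
        rcases hb with hb | hb
        · have hbx : b ≠ x := fun hbx => hx (hbx ▸ hb)
          simp only [Function.update_of_ne hax, Function.update_of_ne hbx]
          exact heqX a ha b hb
        · rcases hb with rfl
          simp only [Function.update_of_ne hax, Function.update_self]
          exact P1 a ha
      · rcases ha with rfl
        rcases hb with hb | hb
        · have hbx : b ≠ a := fun hbx => hx (hbx ▸ hb)
          simp only [Function.update_of_ne hbx, Function.update_self]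
          constructor
          · intro h1; exact ((P1 b hb).mp h1.symm).symm
          · intro h1; exact ((P1 b hb).mpr h1.symm).symm
        · rcases hb with rfl
          simp
    · intro a ha hmem
      rcases ha with ha | ha
      · have hax : a ≠ x := fun hax => hx (hax ▸ ha)
        simp only [Function.update_of_ne hax] at hmem ⊢
        exact helem a ha hmem
      · rcases ha with rfl
        simp only [Function.update_self] at hmem ⊢
        exact P2 hmem
    · rw [hcardX]; omega
    · rw [hcardX]; omega
  by_cases hehe : e ∈ hElem h
  · refine ⟨e, (hwf hehe).2, key e (hwf hehe).2 ?_ ?_⟩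
    · intro a ha
      constructor
      · intro h1
        have := helem a ha (Or.inl (h1 ▸ hehe))
        rw [← this]; exact h1
      · intro h1
        have := helem a ha (Or.inr (h1 ▸ hehe))
        rw [this]; exact h1
    · intro _; rfl
  · by_cases hey : ∃ y ∈ X, s y = e
    · obtain ⟨y, hy, hye⟩ := hey
      refine ⟨s' y, hs'U y, key (s' y) (hs'U y) ?_ ?_⟩
      · intro a ha
        rw [← hye]
        exact heqX a ha y hy
      · intro hmem
        rcases hmem with hmem | hmem
        · exact absurd hmem hehe
        · rw [← hye]; exact helem y hy (Or.inr hmem)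
    · have hne : ((U' \ hElem h) \ (s' '' X)).Nonempty := by
        rw [Set.nonempty_iff_ne_empty]
        intro hemp
        have hsub : U' \ hElem h ⊆ s' '' X := by
          intro a ha
          by_contra hna
          exact Set.eq_empty_iff_forall_notMem.mp hemp a ⟨ha, hna⟩
        have h1 := Set.ncard_le_ncard hsub (hX.image s')
        have h2 : (s' '' X).ncard ≤ X.ncard := Set.ncard_image_le hX
        omega
      obtain ⟨e', ⟨he'U, he'el⟩, he'img⟩ := hne
      refine ⟨e', he'U, key e' he'U ?_ ?_⟩
      · intro a ha
        constructor
        · intro h1; exact absurd ⟨a, ha, h1⟩ hey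
        · intro h1; exact absurd ⟨a, ha, h1⟩ he'img
      · intro hmem
        rcases hmem with hmem | hmem
        · exact absurd hmem hehe
        · exact absurd hmem he'el
end

section
/- Let φ = Q₁x₁…Qₘxₘ. ψ be a prenex SL(k) formula where ψ is a quantifier-free boolean combination of domain-independent test formulae (atoms of the form x ≈ y, x ↪ (y₁,…,y_k), alloc(x), |h| ≥ n). If two SL-structures I and I' are (var(φ), m)-equivalent and I ⊨ φ, then I' ⊨ φ. -/
/-- Domain-independent test formulae for SL(k). -/
inductive TFk (k : ℕ) where
  | eq (x y : ℕ)                       -- x ≈ y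
  | pto (x : ℕ) (ys : Fin k → ℕ)       -- x ↪ (y₁,…,y_k)
  | alloc (x : ℕ)                      -- alloc(x)
  | hge (n : ℕ)                        -- |h| ≥ n

/-- Boolean combinations. -/
inductive BCk (k : ℕ) where
  | atom (a : TFk k)
  | top
  | neg (φ : BCk k)
  | conj (φ ψ : BCk k)

def tfkSat {L : Type} {k : ℕ} (s : ℕ → L) (h : L → Option (Fin k → L)) : TFk k → Prop
  | .eq x y => s x = s y
  | .pto x ys => h (s x) = some (fun i => s (ys i))
  | .alloc x => s x ∈ hDom h
  | .hge n => n ≤ (hDom h).ncard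

def bckSat {L : Type} {k : ℕ} (s : ℕ → L) (h : L → Option (Fin k → L)) : BCk k → Prop
  | .atom a => tfkSat s h a
  | .top => True
  | .neg φ => ¬ bckSat s h φ
  | .conj φ ψ => bckSat s h φ ∧ bckSat s h ψ

/-- Satisfaction of a prenex formula; the prefix is a list of (quantifier, variable)
pairs, `true` meaning ∀ and `false` meaning ∃; quantifiers range over the universe. -/
def prSat {L : Type} {k : ℕ} (U : Set L) (h : L → Option (Fin k → L)) :
    List (Bool × ℕ) → (ℕ → L) → BCk k → Prop
  | [], s, φ => bckSat s h φ
  | (b, x) :: Q, s, φ =>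
      if b then ∀ e ∈ U, prSat U h Q (Function.update s x e) φ
      else ∃ e ∈ U, prSat U h Q (Function.update s x e) φ

def tfkVars {k : ℕ} : TFk k → Set ℕ
  | .eq x y => {x, y}
  | .pto x ys => {x} ∪ Set.range ys
  | .alloc x => {x}
  | .hge _ => ∅

def bckVars {k : ℕ} : BCk k → Set ℕ
  | .atom a => tfkVars a
  | .top => ∅
  | .neg φ => bckVars φ
  | .conj φ ψ => bckVars φ ∪ bckVars ψ

/-- All variables of a prenex formula Q₁x₁…Qₘxₘ.ψ. -/
def prVars {k : ℕ} (Q : List (Bool × ℕ)) (φ : BCk k) : Set ℕ :=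
  {x | ∃ b, (b, x) ∈ Q} ∪ bckVars φ

/-!
The matrix only sees which of its variables are equal, and the values of those variables that
lie in `elem(h)`; two stores that agree on this data satisfy the same boolean combinations of
test formulae. The quantifier prefix is handled by a back-and-forth argument: a location `e`
chosen on one side is answered on the other by `e` itself if `e ∈ elem(h)`, by the partner of a
variable already denoting `e`, or else by a fresh location outside `elem(h)` that no variable
denotes. The last case uses up one of the spare locations, which is why `m` of them suffice for
`m` quantifiers.
-/

section

variable {L : Type} {k : ℕ}

theorem tfkVars_finite (a : TFk k) : (tfkVars a).Finite := by
  cases a <;> simp only [tfkVars, Set.finite_insert, Set.finite_singleton, Set.finite_empty,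
    Set.finite_union, Set.finite_range, and_self]

theorem bckVars_finite (φ : BCk k) : (bckVars φ).Finite := by
  induction φ with
  | atom a => exact tfkVars_finite a
  | top => exact Set.finite_empty
  | neg ψ ih => exact ih
  | conj ψ χ ihψ ihχ => exact ihψ.union ihχ

theorem prVars_finite (Q : List (Bool × ℕ)) (φ : BCk k) : (prVars Q φ).Finite := by
  refine ((Q.map Prod.snd).toFinset.finite_toSet.subset ?_).union (bckVars_finite φ)
  rintro x ⟨b, hb⟩
  exact List.mem_toFinset.2 (List.mem_map.2 ⟨(b, x), hb, rfl⟩)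

def StoreAgree (X : Set ℕ) (h : L → Option (Fin k → L)) (s s' : ℕ → L) : Prop :=
  (∀ x ∈ X, ∀ y ∈ X, (s x = s y ↔ s' x = s' y)) ∧
    ∀ x ∈ X, (s x ∈ hElem h ∨ s' x ∈ hElem h) → s x = s' x

namespace StoreAgree

variable {X Y : Set ℕ} {h : L → Option (Fin k → L)} {s s' : ℕ → L}

theorem symm (hag : StoreAgree X h s s') : StoreAgree X h s' s :=
  ⟨fun x hx y hy => (hag.1 x hx y hy).symm, fun x hx hm => (hag.2 x hx hm.symm).symm⟩

theorem mono (hag : StoreAgree X h s s') (hYX : Y ⊆ X) : StoreAgree Y h s s' :=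
  ⟨fun x hx y hy => hag.1 x (hYX hx) y (hYX hy), fun x hx => hag.2 x (hYX hx)⟩

theorem update (hag : StoreAgree X h s s') {x : ℕ} {e e' : L}
    (helem : (e ∈ hElem h ∨ e' ∈ hElem h) → e = e')
    (hmatch : ∀ y ∈ X, y ≠ x → (s y = e ↔ s' y = e')) :
    StoreAgree X h (Function.update s x e) (Function.update s' x e') := by
  refine ⟨fun y hy z hz => ?_, fun y hy => ?_⟩
  · rcases eq_or_ne y x with rfl | hyx <;> rcases eq_or_ne z y with rfl | hzy
    · simp
    · simpa [Function.update_of_ne hzy, eq_comm] using hmatch z hz hzy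
    · simp
    · rcases eq_or_ne z x with rfl | hzx
      · simpa [Function.update_of_ne hyx] using hmatch y hy hyx
      · simpa [Function.update_of_ne hyx, Function.update_of_ne hzx] using hag.1 y hy z hz
  · rcases eq_or_ne y x with rfl | hyx
    · simpa using helem
    · simpa [Function.update_of_ne hyx] using hag.2 y hy

theorem tfkSat_imp (a : TFk k) (hag : StoreAgree (tfkVars a) h s s') :
    tfkSat s h a → tfkSat s' h a := by
  cases a with
  | eq x y => exact (hag.1 x (by simp [tfkVars]) y (by simp [tfkVars])).mp
  | pto x ys =>
    intro (hpto : h (s x) = some _)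
    have hx : s x = s' x := hag.2 x (by simp [tfkVars]) (.inl (.inl (by simp [hDom, hpto])))
    have hys : ∀ i, s (ys i) = s' (ys i) := fun i =>
      hag.2 (ys i) (by simp [tfkVars]) (.inl (.inr ⟨s x, _, hpto, i, rfl⟩))
    simpa only [tfkSat, ← hx, ← hys] using hpto
  | alloc x =>
    intro (halloc : s x ∈ hDom h)
    simpa only [tfkSat, ← hag.2 x (by simp [tfkVars]) (.inl (.inl halloc))] using halloc
  | hge n => exact id

theorem bckSat_iff (φ : BCk k) (hag : StoreAgree (bckVars φ) h s s') :
    bckSat s h φ ↔ bckSat s' h φ := by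
  induction φ with
  | atom a => exact ⟨hag.tfkSat_imp a, hag.symm.tfkSat_imp a⟩
  | top => rfl
  | neg ψ ih => exact not_congr (ih hag)
  | conj ψ χ ihψ ihχ =>
    exact and_congr (ihψ (hag.mono Set.subset_union_left)) (ihχ (hag.mono Set.subset_union_right))

theorem exists_update {U' : Set L} (hag : StoreAgree X h s s') (hX : X.Finite)
    (hcard : X.ncard < (U' \ hElem h).ncard) (hU' : hElem h ⊆ U') (hs' : ∀ y, s' y ∈ U')
    (x : ℕ) (e : L) :
    ∃ e' ∈ U', StoreAgree X h (Function.update s x e) (Function.update s' x e') := by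
  suffices ∃ e' ∈ U', ((e ∈ hElem h ∨ e' ∈ hElem h) → e = e') ∧
      ∀ y ∈ X, y ≠ x → (s y = e ↔ s' y = e') by
    obtain ⟨e', he', helem, hmatch⟩ := this
    exact ⟨e', he', hag.update helem hmatch⟩
  by_cases he : e ∈ hElem h
  · refine ⟨e, hU' he, fun _ => rfl, fun y hy _ => ⟨fun hye => ?_, fun hye => ?_⟩⟩
    · rwa [← hag.2 y hy (.inl (hye ▸ he))]
    · rwa [hag.2 y hy (.inr (hye ▸ he))]
  by_cases hnamed : ∃ z ∈ X, z ≠ x ∧ s z = e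
  · obtain ⟨z, hz, -, rfl⟩ := hnamed
    exact ⟨s' z, hs' z, fun hm => hag.2 z hz (hm.imp_left fun h' => absurd h' he),
      fun y hy _ => hag.1 y hy z hz⟩
  -- a fresh location: outside `elem(h)` and not denoted by any variable of `X` other than `x`
  have hlt : (s' '' (X \ {x})).ncard < (U' \ hElem h).ncard :=
    calc (s' '' (X \ {x})).ncard ≤ (X \ {x}).ncard := Set.ncard_image_le hX.sdiff
      _ ≤ X.ncard := Set.ncard_le_ncard Set.sdiff_subset hX
      _ < _ := hcard
  obtain ⟨e', ⟨he'U, he'⟩, hfresh⟩ := Set.exists_mem_notMem_of_ncard_lt_ncard hlt (hX.sdiff.image s')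
  refine ⟨e', he'U, fun hm => (hm.elim he he').elim, fun y hy hyx => ?_⟩
  push Not at hnamed
  exact iff_of_false (hnamed y hy hyx) fun hye => hfresh ⟨y, ⟨hy, hyx⟩, hye⟩

end StoreAgree

namespace SLEquiv

variable {X : Set ℕ} {n : ℕ} {U U' : Set L} {s s' : ℕ → L} {h : L → Option (Fin k → L)}

theorem storeAgree (heq : SLEquiv X n U U' s s' h h) : StoreAgree X h s s' :=
  ⟨heq.2.1, heq.2.2.1⟩

theorem symm (heq : SLEquiv X n U U' s s' h h) : SLEquiv X n U' U s' s h h :=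
  ⟨rfl, heq.storeAgree.symm.1, heq.storeAgree.symm.2, heq.2.2.2.2, heq.2.2.2.1⟩

theorem exists_update (heq : SLEquiv X (n + 1) U U' s s' h h) (hX : X.Finite)
    (hU' : hElem h ⊆ U') (hs' : ∀ y, s' y ∈ U') (x : ℕ) (e : L) :
    ∃ e' ∈ U', SLEquiv X n U U' (Function.update s x e) (Function.update s' x e') h h := by
  obtain ⟨-, -, -, hcard, hcard'⟩ := id heq
  obtain ⟨e', he', hag⟩ := heq.storeAgree.exists_update hX (by omega) hU' hs' x e
  exact ⟨e', he', rfl, hag.1, hag.2, by omega, by omega⟩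

end SLEquiv

theorem forall_update_mem {α β : Type*} [DecidableEq α] {U : Set β} {s : α → β}
    (hs : ∀ y, s y ∈ U) (x : α) {e : β} (he : e ∈ U) : ∀ y, Function.update s x e y ∈ U :=
  (Function.forall_update_iff s fun _ l => l ∈ U).2 ⟨he, fun y _ => hs y⟩

theorem prSat_of_slEquiv (Q : List (Bool × ℕ)) (φ : BCk k) {X : Set ℕ} (hX : X.Finite)
    (hφX : bckVars φ ⊆ X) {U U' : Set L} {s s' : ℕ → L} {h : L → Option (Fin k → L)}
    (hwf : hElem h ⊆ U ∩ U') (hsU : ∀ y, s y ∈ U) (hs'U : ∀ y, s' y ∈ U')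
    (heq : SLEquiv X Q.length U U' s s' h h) (hsat : prSat U h Q s φ) :
    prSat U' h Q s' φ := by
  induction Q generalizing s s' with
  | nil => exact ((heq.storeAgree.mono hφX).bckSat_iff φ).mp hsat
  | cons q Q ih =>
    obtain ⟨_ | _, x⟩ := q
    · obtain ⟨e, he, hsat⟩ := hsat
      obtain ⟨e', he', heq'⟩ := heq.exists_update hX (fun _ hl => (hwf hl).2) hs'U x e
      exact ⟨e', he', ih (forall_update_mem hsU x he) (forall_update_mem hs'U x he') heq' hsat⟩
    · intro e' he'
      obtain ⟨e, he, heq'⟩ := heq.symm.exists_update hX (fun _ hl => (hwf hl).1) hsU x e'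
      exact ih (forall_update_mem hsU x he) (forall_update_mem hs'U x he') heq'.symm (hsat e he)

end

theorem prenex_equiv_general {L : Type} {k : ℕ}
    (Q : List (Bool × ℕ)) (φ : BCk k)
    (U U' : Set L) (s s' : ℕ → L) (h h' : L → Option (Fin k → L))
    (hwf : hElem h ⊆ U ∩ U')
    (hsU : ∀ y, s y ∈ U) (hs'U : ∀ y, s' y ∈ U')
    (heq : SLEquiv (prVars Q φ) Q.length U U' s s' h h')
    (hsat : prSat U h Q s φ) :
    prSat U' h' Q s' φ := by
  obtain rfl : h = h' := heq.1
  exact prSat_of_slEquiv Q φ (prVars_finite Q φ) Set.subset_union_right hwf hsU hs'U heq hsat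

/-- (var(φ), m)-equivalent structures satisfy the same prenex formulae
whose matrix is a boolean combination of domain-independent test formulae. -/
theorem prenex_equiv {L : Type} {k : ℕ}
    (Q : List (Bool × ℕ)) (φ : BCk k)
    (U U' : Set L) (s s' : ℕ → L) (h h' : L → Option (Fin k → L))
    (hfin : (hDom h).Finite)
    (hwf : hElem h ⊆ U ∩ U')
    (hsU : ∀ y, s y ∈ U) (hs'U : ∀ y, s' y ∈ U')
    (heq : SLEquiv (prVars Q φ) Q.length U U' s s' h h')
    (hsat : prSat U h Q s φ) :
    prSat U' h' Q s' φ :=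
  prenex_equiv_general Q φ U U' s s' h h' hwf hsU hs'U heq hsat
end

section
/- Let φ = Q₁x₁…Qₘxₘ. ψ be a closed prenex SL(k) formula where ψ is a quantifier-free boolean combination of test formulae of the forms x ≈ y, x ↪ (y₁,…,y_k), alloc(x), |h| ≥ n. Then φ has an infinite model if and only if φ ∧ λₘ has a finite model, where λₘ asserts the existence of m pairwise distinct locations not occurring in the heap (neither in its domain nor in the tuples of its image). -/
/-- Well-formed SL-structure over universe U: the heap is a finite partial map whose
domain and image lie inside U. -/
def wfSL {L : Type} {k : ℕ} (U : Set L) (h : L → Option (Fin k → L)) : Prop :=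
  hElem h ⊆ U ∧ (hDom h).Finite

/-!
Two structures that share the heap `h` satisfy the same closed prenex formulas with `m`
quantifiers as long as each has at least `m` locations outside `elem(h)` (or infinitely many).
Play the back-and-forth game along the quantifier prefix, maintaining that the two stores induce
the same equalities on the variables assigned so far and agree wherever either of them points into
the heap. A heap location is answered by itself, an old value by the corresponding old value, and a
new location outside the heap by a new location outside the heap; the last answer exists because
fewer than `m` variables have been assigned before any of the `m` moves. Hence an infinite model
may be cut down to `elem(h)`, `m` further locations and one point for the store, and a finite model
with `m` locations outside `elem(h)` may be enlarged to all of `ℕ`.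
-/

namespace SL

variable {L : Type} {k : ℕ}

theorem hElem_finite_of_hDom_finite {h : L → Option (Fin k → L)} (hdom : (hDom h).Finite) :
    (hElem h).Finite := by
  have hvals : (Option.some ⁻¹' (h '' hDom h) : Set (Fin k → L)).Finite :=
    (hdom.image h).preimage (Option.some_injective _).injOn
  refine hdom.union ((hvals.biUnion fun v _ => Set.finite_range v).subset ?_)
  rintro _ ⟨l, v, hv, i, rfl⟩
  exact Set.mem_biUnion (x := v) ⟨l, by simp [hDom, hv], hv⟩ ⟨i, rfl⟩

def boundVars (Q : List (Bool × ℕ)) : Set ℕ := {x | ∃ b, (b, x) ∈ Q}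

theorem boundVars_cons (b : Bool) (x : ℕ) (Q : List (Bool × ℕ)) :
    boundVars ((b, x) :: Q) = insert x (boundVars Q) := by
  ext y
  simp only [boundVars, List.mem_cons, Prod.mk.injEq, Set.mem_ofPred_eq, Set.mem_insert_iff]
  grind

structure StoresAgreeOn (h : L → Option (Fin k → L)) (W : Set ℕ) (s s' : ℕ → L) : Prop where
  eq_iff_eq : ∀ x ∈ W, ∀ y ∈ W, s x = s y ↔ s' x = s' y
  eq_of_mem_hElem : ∀ x ∈ W, s x ∈ hElem h ∨ s' x ∈ hElem h → s x = s' x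

namespace StoresAgreeOn

variable {h : L → Option (Fin k → L)} {W : Set ℕ} {s s' : ℕ → L}

theorem empty (h : L → Option (Fin k → L)) (s s' : ℕ → L) : StoresAgreeOn h ∅ s s' :=
  ⟨by simp, by simp⟩

theorem symm (H : StoresAgreeOn h W s s') : StoresAgreeOn h W s' s :=
  ⟨fun x hx y hy => (H.eq_iff_eq x hx y hy).symm,
    fun x hx hel => (H.eq_of_mem_hElem x hx hel.symm).symm⟩

theorem tfkSat_imp (H : StoresAgreeOn h W s s') (a : TFk k) (ha : tfkVars a ⊆ W) :
    tfkSat s h a → tfkSat s' h a := by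
  cases a with
  | eq x y => exact (H.eq_iff_eq x (ha (by simp [tfkVars])) y (ha (by simp [tfkVars]))).mp
  | pto x ys =>
    simp only [tfkSat]
    intro hpto
    have hsx : s x = s' x :=
      H.eq_of_mem_hElem x (ha (by simp [tfkVars])) (.inl (.inl (by simp [hDom, hpto])))
    have hsys : ∀ i, s (ys i) = s' (ys i) := fun i =>
      H.eq_of_mem_hElem (ys i) (ha (by simp [tfkVars])) (.inl (.inr ⟨s x, _, hpto, i, rfl⟩))
    simpa only [hsx, hsys] using hpto
  | alloc x =>
    intro hx
    rwa [tfkSat, ← H.eq_of_mem_hElem x (ha (by simp [tfkVars])) (.inl (.inl hx))]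
  | hge n => exact id

theorem bckSat_iff (H : StoresAgreeOn h W s s') (φ : BCk k) (hφ : bckVars φ ⊆ W) :
    bckSat s h φ ↔ bckSat s' h φ := by
  induction φ with
  | atom a => exact ⟨H.tfkSat_imp a hφ, H.symm.tfkSat_imp a hφ⟩
  | top => exact Iff.rfl
  | neg φ ih => exact not_congr (ih hφ)
  | conj φ ψ ihφ ihψ =>
    exact and_congr (ihφ (Set.subset_union_left.trans hφ)) (ihψ (Set.subset_union_right.trans hφ))

theorem update (H : StoresAgreeOn h W s s') {x : ℕ} {e e' : L}
    (heq : ∀ y ∈ W, e = s y ↔ e' = s' y) (hel : e ∈ hElem h ∨ e' ∈ hElem h → e = e') :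
    StoresAgreeOn h (insert x W) (Function.update s x e) (Function.update s' x e') := by
  have hW : ∀ y ∈ insert x W, y ≠ x → y ∈ W := fun y hy hyx => hy.resolve_left hyx
  constructor
  · intro y hy z hz
    by_cases hyx : y = x <;> by_cases hzx : z = x
    · simp [hyx, hzx]
    · simpa [hyx, hzx] using heq z (hW z hz hzx)
    · simpa [hyx, hzx, eq_comm] using heq y (hW y hy hyx)
    · simpa [hyx, hzx] using H.eq_iff_eq y (hW y hy hyx) z (hW z hz hzx)
  · intro y hy
    by_cases hyx : y = x
    · simpa [hyx] using hel
    · simpa [hyx] using H.eq_of_mem_hElem y (hW y hy hyx)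

theorem exists_update {U' : Set L} (H : StoresAgreeOn h W s s') (hU' : hElem h ⊆ U')
    (hs' : ∀ x, s' x ∈ U') (hW : W.encard < (U' \ hElem h).encard) (x : ℕ) (e : L) :
    ∃ e' ∈ U', StoresAgreeOn h (insert x W) (Function.update s x e) (Function.update s' x e') := by
  by_cases hel : e ∈ hElem h
  · refine ⟨e, hU' hel, H.update (fun y hy => ?_) fun _ => rfl⟩
    constructor <;> rintro rfl
    exacts [H.eq_of_mem_hElem y hy (.inl hel), (H.eq_of_mem_hElem y hy (.inr hel)).symm]
  by_cases hold : ∃ y ∈ W, s y = e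
  · obtain ⟨y₀, hy₀, rfl⟩ := hold
    have hel' : s' y₀ ∉ hElem h := fun h' => hel (H.eq_of_mem_hElem y₀ hy₀ (.inr h') ▸ h')
    exact ⟨s' y₀, hs' y₀, H.update (fun y hy => H.eq_iff_eq y₀ hy₀ y hy) (by tauto)⟩
  push Not at hold
  obtain ⟨e', ⟨he'U', he'el⟩, he'new⟩ : ∃ e' ∈ U' \ hElem h, e' ∉ s' '' W :=
    Set.not_subset.mp fun hsub =>
      ((Set.encard_le_encard hsub).trans (Set.encard_image_le s' W)).not_gt hW
  refine ⟨e', he'U', H.update (fun y hy => ?_) (by tauto)⟩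
  exact iff_of_false (fun he => hold y hy he.symm) (fun he' => he'new ⟨y, hy, he'.symm⟩)

end StoresAgreeOn

theorem forall_update_mem {U : Set L} {s : ℕ → L} (hs : ∀ x, s x ∈ U) {e : L} (he : e ∈ U)
    (x : ℕ) : ∀ y, Function.update s x e y ∈ U :=
  (Function.forall_update_iff s fun _ v => v ∈ U).mpr ⟨he, fun y _ => hs y⟩

theorem prSat_of_prSat_of_storesAgreeOn {h : L → Option (Fin k → L)} {U U' : Set L}
    (hU : hElem h ⊆ U) (hU' : hElem h ⊆ U') {m : ℕ} (hm : (m : ℕ∞) ≤ (U \ hElem h).encard)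
    (hm' : (m : ℕ∞) ≤ (U' \ hElem h).encard) (φ : BCk k) (Q : List (Bool × ℕ))
    (W : Finset ℕ) (s s' : ℕ → L) (hs : ∀ x, s x ∈ U) (hs' : ∀ x, s' x ∈ U')
    (H : StoresAgreeOn h W s s') (hφ : bckVars φ ⊆ ↑W ∪ boundVars Q)
    (hcard : W.card + Q.length ≤ m) : prSat U h Q s φ → prSat U' h Q s' φ := by
  induction Q generalizing W s s' with
  | nil => exact (H.bckSat_iff φ (by simpa [boundVars] using hφ)).mp
  | cons p Q ih =>
    obtain ⟨b, x⟩ := p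
    have hlt : (W : Set ℕ).encard < m := by
      simp only [List.length_cons] at hcard
      simp only [Set.encard_coe_eq_coe_finsetCard, Nat.cast_lt]
      omega
    have hnext : ∀ e ∈ U, ∀ e' ∈ U',
        StoresAgreeOn h (insert x ↑W) (Function.update s x e) (Function.update s' x e') →
        prSat U h Q (Function.update s x e) φ → prSat U' h Q (Function.update s' x e') φ := by
      intro e he e' he' H'
      refine ih (insert x W) _ _ (forall_update_mem hs he x) (forall_update_mem hs' he' x)
        (by rwa [Finset.coe_insert]) ?_ ?_
      · rw [boundVars_cons] at hφ
        rw [Finset.coe_insert]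
        grind
      · have := Finset.card_insert_le x W
        simp only [List.length_cons] at hcard
        omega
    cases b with
    | false =>
      rintro ⟨e, he, hsat⟩
      obtain ⟨e', he', H'⟩ := H.exists_update hU' hs' (hlt.trans_le hm') x e
      exact ⟨e', he', hnext e he e' he' H' hsat⟩
    | true =>
      intro hsat e' he'
      obtain ⟨e, he, H'⟩ := H.symm.exists_update hU hs (hlt.trans_le hm) x e'
      exact hnext e he e' he' H'.symm (hsat e he)

theorem prSat_of_prSat_of_closed {h : L → Option (Fin k → L)} {U U' : Set L}
    (hU : hElem h ⊆ U) (hU' : hElem h ⊆ U') {Q : List (Bool × ℕ)}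
    (hm : (Q.length : ℕ∞) ≤ (U \ hElem h).encard) (hm' : (Q.length : ℕ∞) ≤ (U' \ hElem h).encard)
    {φ : BCk k} (hclosed : bckVars φ ⊆ boundVars Q) {s s' : ℕ → L} (hs : ∀ x, s x ∈ U)
    (hs' : ∀ x, s' x ∈ U') : prSat U h Q s φ → prSat U' h Q s' φ :=
  prSat_of_prSat_of_storesAgreeOn hU hU' hm hm' φ Q ∅ s s' hs hs'
    (by simpa using StoresAgreeOn.empty h s s') (by simpa using hclosed) (by simp)

end SL

/-- `λₘ` holds in `(U, s, h)` exactly when `m ≤ |U \ elem(h)|`; universes are sets of `ℕ`. -/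
theorem infinite_iff_finite_with_slack {k : ℕ}
    (Q : List (Bool × ℕ)) (φ : BCk k)
    (hclosed : bckVars φ ⊆ {x | ∃ b, (b, x) ∈ Q}) :
    (∃ (U : Set ℕ) (s : ℕ → ℕ) (h : ℕ → Option (Fin k → ℕ)),
        U.Infinite ∧ wfSL U h ∧ (∀ x, s x ∈ U) ∧ prSat U h Q s φ)
    ↔
    (∃ (U : Set ℕ) (s : ℕ → ℕ) (h : ℕ → Option (Fin k → ℕ)),
        U.Finite ∧ U.Nonempty ∧ wfSL U h ∧ (∀ x, s x ∈ U) ∧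
        prSat U h Q s φ ∧ Q.length ≤ (U \ hElem h).ncard) := by
  constructor
  · rintro ⟨U, s, h, hUinf, ⟨hUel, hdom⟩, hs, hsat⟩
    have helfin := SL.hElem_finite_of_hDom_finite hdom
    have hfree : (U \ hElem h).Infinite := hUinf.sdiff helfin
    obtain ⟨t, htfree, htfin, htcard⟩ := hfree.exists_subset_ncard_eq Q.length
    have hU'fin : (insert 0 (hElem h ∪ t)).Finite := (helfin.union htfin).insert 0
    have hslack : Q.length ≤ (insert 0 (hElem h ∪ t) \ hElem h).ncard :=
      htcard ▸ Set.ncard_le_ncard (fun a ha => ⟨.inr (.inr ha), (htfree ha).2⟩) hU'fin.sdiff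
    refine ⟨_, fun _ => 0, h, hU'fin, ⟨0, .inl rfl⟩, ⟨fun a ha => .inr (.inl ha), hdom⟩,
      fun _ => .inl rfl, ?_, hslack⟩
    exact SL.prSat_of_prSat_of_closed hUel (fun a ha => .inr (.inl ha)) (by simp [hfree])
      ((Nat.cast_le.mpr hslack).trans (Set.ncard_le_encard _)) hclosed hs (fun _ => .inl rfl) hsat
  · rintro ⟨U, s, h, -, -, ⟨hUel, hdom⟩, hs, hsat, hslack⟩
    have hfree : (Set.univ \ hElem h).Infinite := by
      simpa [Set.compl_eq_univ_sdiff] using (SL.hElem_finite_of_hDom_finite hdom).infinite_compl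
    refine ⟨Set.univ, s, h, Set.infinite_univ, ⟨Set.subset_univ _, hdom⟩, fun _ => trivial, ?_⟩
    exact SL.prSat_of_prSat_of_closed hUel (Set.subset_univ _)
      ((Nat.cast_le.mpr hslack).trans (Set.ncard_le_encard _)) (by simp [hfree]) hclosed hs
      (fun _ => trivial) hsat
end

section
/- If an infinite SL-structure (U, s, h) satisfies a closed prenex formula φ with m quantifiers whose matrix is a boolean combination of domain-independent test formulae, then the restriction of the universe to any finite subset U' ⊇ elem(h) containing at least m additional locations outside elem(h) yields a finite model (U', s, h) of φ. -/
/-!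
Only the equality pattern of the stored locations and their relation to the finite set `elem(h)`
matter to the matrix. So the semantic game on `U` can be replayed on `U'`, answering every choice by
a location with the same role: a location of `elem(h)` by itself, the value of an earlier variable by
the corresponding value, a fresh location by a fresh one. Fresh answers always exist in the infinite
`U`, and `U'` has one spare fresh location per quantifier.
-/

section Transfer

variable {L : Type} {k : ℕ} {h : L → Option (Fin k → L)}

def LocEquiv (h : L → Option (Fin k → L)) (W : Finset ℕ) (s s' : ℕ → L) (a a' : L) : Prop :=
  (∀ x ∈ W, s x = a ↔ s' x = a') ∧ (a ∈ hElem h ∨ a' ∈ hElem h → a = a')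

def StoreEquiv (h : L → Option (Fin k → L)) (W : Finset ℕ) (s s' : ℕ → L) : Prop :=
  ∀ x ∈ W, LocEquiv h W s s' (s x) (s' x)

def spareLocs (h : L → Option (Fin k → L)) (V : Set L) (W : Finset ℕ) (s : ℕ → L) : Set L :=
  V \ (hElem h ∪ s '' W)

variable {W : Finset ℕ} {s s' : ℕ → L} {a a' : L}

theorem LocEquiv.symm (e : LocEquiv h W s s' a a') : LocEquiv h W s' s a' a :=
  ⟨fun x hx => (e.1 x hx).symm, fun hel => (e.2 hel.symm).symm⟩

theorem StoreEquiv.symm (e : StoreEquiv h W s s') : StoreEquiv h W s' s :=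
  fun x hx => (e x hx).symm

theorem StoreEquiv.apply_eq_of_mem_hElem (e : StoreEquiv h W s s') {x : ℕ} (hx : x ∈ W)
    (hel : s x ∈ hElem h) : s' x = s x :=
  ((e x hx).2 (Or.inl hel)).symm

theorem heap_apply_eq (hel : a ∈ hElem h ∨ a' ∈ hElem h → a = a') : h a = h a' := by
  by_cases hdom : a ∈ hDom h ∨ a' ∈ hDom h
  · rw [hel (hdom.imp Or.inl Or.inl)]
  · obtain ⟨ha, ha'⟩ := not_or.mp hdom
    rw [show h a = none from not_not.mp ha, show h a' = none from not_not.mp ha']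

theorem StoreEquiv.tfkSat_of_tfkSat (e : StoreEquiv h W s s') {a : TFk k}
    (hvars : tfkVars a ⊆ W) (hsat : tfkSat s h a) : tfkSat s' h a := by
  cases a with
  | eq x y =>
    have hx : x ∈ W := hvars (by simp [tfkVars])
    have hy : y ∈ W := hvars (by simp [tfkVars])
    exact (((e x hx).1 y hy).1 hsat.symm).symm
  | pto x ys =>
    have hys : ∀ i, ys i ∈ W := fun i => hvars (Or.inr ⟨i, rfl⟩)
    have himg : ∀ i, s (ys i) ∈ hElem h := fun i => Or.inr ⟨s x, _, hsat, i, rfl⟩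
    change h (s' x) = some fun i => s' (ys i)
    rw [← heap_apply_eq (e x (hvars (by simp [tfkVars]))).2, hsat]
    simp only [e.apply_eq_of_mem_hElem (hys _) (himg _)]
  | alloc x =>
    change h (s' x) ≠ none
    rwa [← heap_apply_eq (e x (hvars (by simp [tfkVars]))).2]
  | hge n => exact hsat

theorem StoreEquiv.bckSat_iff (e : StoreEquiv h W s s') {φ : BCk k} (hvars : bckVars φ ⊆ W) :
    bckSat s h φ ↔ bckSat s' h φ := by
  induction φ with
  | atom a => exact ⟨e.tfkSat_of_tfkSat hvars, e.symm.tfkSat_of_tfkSat hvars⟩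
  | top => rfl
  | neg ψ ih => exact not_congr (ih hvars)
  | conj ψ χ ihψ ihχ =>
    exact and_congr (ihψ (Set.subset_union_left.trans hvars))
      (ihχ (Set.subset_union_right.trans hvars))

theorem LocEquiv.update {b b' : L} (e : LocEquiv h W s s' b b') (q : ℕ)
    (hab : a = b ↔ a' = b') :
    LocEquiv h (insert q W) (Function.update s q a) (Function.update s' q a') b b' := by
  refine ⟨fun x hx => ?_, e.2⟩
  by_cases hxq : x = q
  · subst hxq
    simpa using hab
  · simpa [hxq] using e.1 x ((Finset.mem_insert.mp hx).resolve_left hxq)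

theorem StoreEquiv.update (e : StoreEquiv h W s s') (q : ℕ) (ea : LocEquiv h W s s' a a') :
    StoreEquiv h (insert q W) (Function.update s q a) (Function.update s' q a') := by
  intro x hx
  by_cases hxq : x = q
  · subst hxq
    simpa using ea.update x (iff_of_true rfl rfl)
  · have hxW := (Finset.mem_insert.mp hx).resolve_left hxq
    simpa [hxq] using (e x hxW).update q (eq_comm.trans ((ea.1 x hxW).trans eq_comm))

theorem StoreEquiv.exists_locEquiv {V : Set L} (e : StoreEquiv h W s s') (hV : hElem h ⊆ V)
    (hs'V : Set.MapsTo s' W V) (hspare : (spareLocs h V W s').Nonempty) (a : L) :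
    ∃ a' ∈ V, LocEquiv h W s s' a a' := by
  by_cases hval : ∃ x ∈ W, s x = a
  · obtain ⟨x, hx, rfl⟩ := hval
    exact ⟨s' x, hs'V hx, e x hx⟩
  have hnew : ∀ x ∈ W, s x ≠ a := fun x hx hxa => hval ⟨x, hx, hxa⟩
  by_cases hel : a ∈ hElem h
  · refine ⟨a, hV hel, fun x hx => iff_of_false (hnew x hx) fun hx' => hnew x hx ?_, fun _ => rfl⟩
    exact (e.symm.apply_eq_of_mem_hElem hx (hx' ▸ hel)).trans hx'
  · obtain ⟨a', ha'V, ha'⟩ := hspare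
    refine ⟨a', ha'V, fun x hx => iff_of_false (hnew x hx) fun hx' => ha' (Or.inr ⟨x, hx, hx'⟩),
      fun hel' => absurd (Or.inl (hel'.resolve_left hel)) ha'⟩

theorem mapsTo_update_insert {β : Type*} {f : ℕ → β} {S : Set β} {b : β}
    (hf : Set.MapsTo f W S) (hb : b ∈ S) (q : ℕ) :
    Set.MapsTo (Function.update f q b) (insert q W : Finset ℕ) S := by
  intro x hx
  by_cases hxq : x = q
  · simpa [hxq] using hb
  · simpa [hxq] using hf ((Finset.mem_insert.mp hx).resolve_left hxq)

theorem spareLocs_sdiff_subset_update (V : Set L) (q : ℕ) (a' : L) :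
    spareLocs h V W s' \ {a'} ⊆ spareLocs h V (insert q W) (Function.update s' q a') := by
  rintro b ⟨⟨hbV, hb⟩, hba'⟩
  refine ⟨hbV, ?_⟩
  rintro (hel | ⟨x, hx, rfl⟩)
  · exact hb (Or.inl hel)
  · by_cases hxq : x = q
    · simp [hxq] at hba'
    · simp only [Function.update_of_ne hxq] at hb
      exact hb (Or.inr ⟨x, (Finset.mem_insert.mp hx).resolve_left hxq, rfl⟩)

theorem le_ncard_spareLocs_update {V : Set L} (hV : V.Finite) {n : ℕ}
    (hn : n + 1 ≤ (spareLocs h V W s').ncard) (q : ℕ) (a' : L) :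
    n ≤ (spareLocs h V (insert q W) (Function.update s' q a')).ncard :=
  calc n ≤ (spareLocs h V W s').ncard - 1 := by omega
    _ ≤ (spareLocs h V W s' \ {a'}).ncard := Set.pred_ncard_le_ncard_sdiff_singleton _ _
    _ ≤ _ :=
      Set.ncard_le_ncard (spareLocs_sdiff_subset_update V q a') (hV.subset Set.sdiff_subset)

theorem prSat_transfer {U U' : Set L} {φ : BCk k} (hinf : U.Infinite) (hU : hElem h ⊆ U)
    (hU'fin : U'.Finite) (hU' : hElem h ⊆ U') :
    ∀ (Q : List (Bool × ℕ)) (W : Finset ℕ) (s s' : ℕ → L), StoreEquiv h W s s' →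
      Set.MapsTo s W U → Set.MapsTo s' W U' → bckVars φ ⊆ ↑W ∪ {x | ∃ b, (b, x) ∈ Q} →
      Q.length ≤ (spareLocs h U' W s').ncard → prSat U h Q s φ → prSat U' h Q s' φ
  | [], W, s, s', e, _, _, hvars, _, hsat => (e.bckSat_iff (by simpa using hvars)).mp hsat
  | (b, q) :: Q, W, s, s', e, hsU, hs'U', hvars, hroom, hsat => by
    have hvars' : bckVars φ ⊆ ↑(insert q W) ∪ {x | ∃ b, (b, x) ∈ Q} := by
      intro x hx
      obtain hxW | ⟨b', hb'⟩ := hvars hx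
      · exact Or.inl (Finset.mem_insert_of_mem hxW)
      · obtain ⟨-, rfl⟩ | hb' := List.mem_cons.mp hb' |>.imp_left Prod.mk.inj
        · exact Or.inl (Finset.mem_insert_self x W)
        · exact Or.inr ⟨b', hb'⟩
    have step : ∀ a ∈ U, ∀ a' ∈ U', LocEquiv h W s s' a a' →
        prSat U h Q (Function.update s q a) φ → prSat U' h Q (Function.update s' q a') φ :=
      fun a ha a' ha' ea => prSat_transfer hinf hU hU'fin hU' Q (insert q W) _ _ (e.update q ea)
        (mapsTo_update_insert hsU ha q) (mapsTo_update_insert hs'U' ha' q) hvars'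
        (le_ncard_spareLocs_update hU'fin hroom q a')
    cases b with
    | false =>
      obtain ⟨a, ha, hsat⟩ := hsat
      have hspare : (spareLocs h U' W s').Nonempty := by
        rw [List.length_cons] at hroom
        exact Set.nonempty_of_ncard_ne_zero (by omega)
      obtain ⟨a', ha', ea⟩ := e.exists_locEquiv hU' hs'U' hspare a
      exact ⟨a', ha', step a ha a' ha' ea hsat⟩
    | true =>
      intro a' ha'
      have hspare : (spareLocs h U W s).Nonempty :=
        (hinf.sdiff ((hU'fin.subset hU').union (W.finite_toSet.image s))).nonempty
      obtain ⟨a, ha, ea⟩ := e.symm.exists_locEquiv hU hsU hspare a'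
      exact step a ha a' ha' ea.symm (hsat a ha)

end Transfer

theorem infinite_model_restriction_general {L : Type} {k : ℕ}
    (Q : List (Bool × ℕ)) (φ : BCk k)
    (hclosed : bckVars φ ⊆ {x | ∃ b, (b, x) ∈ Q})
    (U : Set L) (s : ℕ → L) (h : L → Option (Fin k → L))
    (hinf : U.Infinite) (hwf : hElem h ⊆ U)
    (hsat : prSat U h Q s φ)
    (U' : Set L) (hU'fin : U'.Finite)
    (hU'elem : hElem h ⊆ U')
    (hslack : Q.length ≤ (U' \ hElem h).ncard) :
    prSat U' h Q s φ :=
  prSat_transfer hinf hwf hU'fin hU'elem Q ∅ s s (fun _ hx => absurd hx (Finset.notMem_empty _))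
    (by simpa using Set.mapsTo_empty s U) (by simpa using Set.mapsTo_empty s U')
    (by simpa using hclosed) (by simpa [spareLocs] using hslack) hsat

/-- restricting the universe of an infinite model of a closed prenex
formula (matrix over domain-independent test formulae) to a finite subset
U' ⊇ elem(h) with at least m extra locations outside elem(h) yields a finite model. -/
theorem infinite_model_restriction {L : Type} {k : ℕ}
    (Q : List (Bool × ℕ)) (φ : BCk k)
    (hclosed : bckVars φ ⊆ {x | ∃ b, (b, x) ∈ Q})
    (U : Set L) (s : ℕ → L) (h : L → Option (Fin k → L))
    (hinf : U.Infinite) (hfin : (hDom h).Finite) (hwf : hElem h ⊆ U)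
    (hsU : ∀ x, s x ∈ U)
    (hsat : prSat U h Q s φ)
    (U' : Set L) (hU'fin : U'.Finite) (hU'sub : U' ⊆ U)
    (hU'elem : hElem h ⊆ U')
    (hslack : Q.length ≤ (U' \ hElem h).ncard) :
    prSat U' h Q s φ :=
  infinite_model_restriction_general Q φ hclosed U s h hinf hwf hsat U' hU'fin hU'elem hslack
end

section
/- A quantified boolean combination of test formulae φ has a finite SL model if and only if its first-order translation T(φ) has a finite FO model, where the translation maps alloc(x) to 𝔡(x), maps x ↪ (y₁,…,y_k) to 𝔡(x) ∧ ⋀ᵢ yᵢ ≈ 𝔣ᵢ(x), maps |U| ≥ n to the existence of n distinct elements, |h| ≥ n to the existence of n distinct elements satisfying 𝔡, and |h| ≥ |U|−n to the existence of n elements covering all elements not satisfying 𝔡, and commutes with boolean connectives and quantifiers. -/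
/-- Quantified boolean combinations of test formulae for SL(k). -/
inductive QTF (k : ℕ) where
  | eq (x y : ℕ)                     -- x ≈ y
  | pto (x : ℕ) (ys : Fin k → ℕ)     -- x ↪ (y₁,…,y_k)
  | alloc (x : ℕ)                    -- alloc(x)
  | hge (n : ℕ)                      -- |h| ≥ n
  | uge (n : ℕ)                      -- |U| ≥ n
  | hgeU (n : ℕ)                     -- |h| ≥ |U| − n
  | top
  | neg (φ : QTF k)
  | conj (φ ψ : QTF k)
  | ex (x : ℕ) (φ : QTF k)
  | all (x : ℕ) (φ : QTF k)

/-- SL semantics of quantified test formulae. -/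
def slSat {L : Type} {k : ℕ} (U : Set L) (h : L → Option (Fin k → L)) :
    (ℕ → L) → QTF k → Prop
  | s, .eq x y => s x = s y
  | s, .pto x ys => h (s x) = some (fun j => s (ys j))
  | s, .alloc x => s x ∈ hDom h
  | _, .hge n => n ≤ (hDom h).ncard
  | _, .uge n => n ≤ U.ncard
  | _, .hgeU n => (U \ hDom h).ncard ≤ n
  | _, .top => True
  | s, .neg φ => ¬ slSat U h s φ
  | s, .conj φ ψ => slSat U h s φ ∧ slSat U h s ψ
  | s, .ex x φ => ∃ e ∈ U, slSat U h (Function.update s x e) φ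
  | s, .all x φ => ∀ e ∈ U, slSat U h (Function.update s x e) φ

/-- FO semantics of the translation T(φ): the structure interprets the unary
predicate 𝔡 by `d` and the unary functions 𝔣ᵢ by `f i`; `alloc(x)` becomes `𝔡(x)`,
`x ↪ ȳ` becomes `𝔡(x) ∧ ⋀ᵢ yᵢ ≈ 𝔣ᵢ(x)`, `|U| ≥ n` becomes existence of n distinct
elements, `|h| ≥ n` existence of n distinct elements satisfying 𝔡, and
`|h| ≥ |U|−n` existence of n elements covering all elements not satisfying 𝔡;
booleans and quantifiers are translated homomorphically. -/
def foSat {L : Type} {k : ℕ} (D : Set L) (d : L → Prop) (f : Fin k → L → L) :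
    (ℕ → L) → QTF k → Prop
  | s, .eq x y => s x = s y
  | s, .pto x ys => d (s x) ∧ ∀ i, s (ys i) = f i (s x)
  | s, .alloc x => d (s x)
  | _, .hge n => n ≤ {l ∈ D | d l}.ncard
  | _, .uge n => n ≤ D.ncard
  | _, .hgeU n => {l ∈ D | ¬ d l}.ncard ≤ n
  | _, .top => True
  | s, .neg φ => ¬ foSat D d f s φ
  | s, .conj φ ψ => foSat D d f s φ ∧ foSat D d f s ψ
  | s, .ex x φ => ∃ e ∈ D, foSat D d f (Function.update s x e) φ
  | s, .all x φ => ∀ e ∈ D, foSat D d f (Function.update s x e) φ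

lemma update_mem {L : Type} {U : Set L} {s : ℕ → L} (hs : ∀ x, s x ∈ U)
    {e : L} (he : e ∈ U) (x : ℕ) : ∀ y, Function.update s x e y ∈ U := by
  intro y
  by_cases hy : y = x
  · subst hy; simp [Function.update_self, he]
  · simp [Function.update_of_ne hy, hs y]

lemma key_equiv {L : Type} {k : ℕ} (U : Set L) (h : L → Option (Fin k → L))
    (d : L → Prop) (f : Fin k → L → L)
    (hsub : hDom h ⊆ U)
    (hd : ∀ l ∈ U, (l ∈ hDom h ↔ d l))
    (hf : ∀ l v, h l = some v → ∀ i, f i l = v i) :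
    ∀ (φ : QTF k) (s : ℕ → L), (∀ x, s x ∈ U) →
      (slSat U h s φ ↔ foSat U d f s φ) := by
  have hdomeq : hDom h = {l ∈ U | d l} := by
    ext l
    constructor
    · intro hl; exact ⟨hsub hl, (hd l (hsub hl)).mp hl⟩
    · rintro ⟨hlU, hdl⟩; exact (hd l hlU).mpr hdl
  have hdiffeq : U \ hDom h = {l ∈ U | ¬ d l} := by
    ext l
    constructor
    · rintro ⟨hlU, hln⟩; exact ⟨hlU, fun c => hln ((hd l hlU).mpr c)⟩
    · rintro ⟨hlU, hln⟩; exact ⟨hlU, fun c => hln ((hd l hlU).mp c)⟩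
  intro φ
  induction φ with
  | eq x y => intro s hs; simp [slSat, foSat]
  | pto x ys =>
    intro s hs
    simp only [slSat, foSat]
    constructor
    · intro he
      refine ⟨(hd _ (hs x)).mp (by simp [hDom, he]), fun i => ?_⟩
      rw [hf _ _ he i]
    · rintro ⟨hdx, hfi⟩
      have hmem : s x ∈ hDom h := (hd _ (hs x)).mpr hdx
      obtain ⟨v, hv⟩ := Option.ne_none_iff_exists'.mp hmem
      rw [hv]
      congr 1
      funext j
      rw [hfi j, hf _ _ hv j]
  | alloc x => intro s hs; simpa [slSat, foSat] using hd _ (hs x)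
  | hge n => intro s hs; simp [slSat, foSat, hdomeq]
  | uge n => intro s hs; simp [slSat, foSat]
  | hgeU n => intro s hs; simp [slSat, foSat, ← hdiffeq]
  | top => intro s hs; simp [slSat, foSat]
  | neg φ ih => intro s hs; simp only [slSat, foSat]; exact not_congr (ih s hs)
  | conj φ ψ ih1 ih2 =>
    intro s hs; simp only [slSat, foSat]; exact and_congr (ih1 s hs) (ih2 s hs)
  | ex x φ ih =>
    intro s hs
    simp only [slSat, foSat]
    exact exists_congr fun e => and_congr_right fun he =>
      ih _ (update_mem hs he x)
  | all x φ ih =>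
    intro s hs
    simp only [slSat, foSat]
    exact forall_congr' fun e => imp_congr_right fun he =>
      ih _ (update_mem hs he x)

/-- a quantified boolean combination of test formulae has a finite SL
model iff its first-order translation has a finite FO model (countable universes,
encoded over ℕ). -/
theorem sl_to_fo {k : ℕ} (φ : QTF k) :
    (∃ (U : Set ℕ) (s : ℕ → ℕ) (h : ℕ → Option (Fin k → ℕ)),
        U.Finite ∧ U.Nonempty ∧ hElem h ⊆ U ∧ (∀ x, s x ∈ U) ∧ slSat U h s φ)
    ↔
    (∃ (D : Set ℕ) (d : ℕ → Prop) (f : Fin k → ℕ → ℕ) (s : ℕ → ℕ),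
        D.Finite ∧ D.Nonempty ∧ (∀ l ∈ D, ∀ i, f i l ∈ D) ∧ (∀ x, s x ∈ D) ∧
        foSat D d f s φ) := by
  classical
  constructor
  · rintro ⟨U, s, h, hUfin, hUne, hsub, hs, hsat⟩
    refine ⟨U, (· ∈ hDom h), fun i l => (h l).elim l (· i), s, hUfin, hUne, ?_, hs, ?_⟩
    · intro l hl i
      cases hv : h l with
      | none => simpa [hv] using hl
      | some v =>
        simp only [hv, Option.elim]
        exact hsub (Or.inr ⟨l, v, hv, i, rfl⟩)
    · refine (key_equiv U h (· ∈ hDom h) _ (fun l hl => hsub (Or.inl hl))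
        (fun l _ => Iff.rfl) ?_ φ s hs).mp hsat
      intro l v hv i; simp [hv]
  · rintro ⟨D, d, f, s, hDfin, hDne, hfD, hs, hsat⟩
    set h : ℕ → Option (Fin k → ℕ) :=
      fun l => if l ∈ D ∧ d l then some (fun i => f i l) else none with hh
    have hdomD : hDom h ⊆ D := by
      intro l hl
      by_cases hc : l ∈ D ∧ d l
      · exact hc.1
      · exact absurd (by simp [hh, hc]) hl
    have hdiff : ∀ l ∈ D, (l ∈ hDom h ↔ d l) := by
      intro l hl
      constructor
      · intro hld
        by_contra hdl
        exact hld (by simp [hh, hdl])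
      · intro hdl; simp [hDom, hh, hl, hdl]
    have hfv : ∀ l v, h l = some v → ∀ i, f i l = v i := by
      intro l v hv i
      by_cases hc : l ∈ D ∧ d l
      · simp only [hh, if_pos hc, Option.some.injEq] at hv
        rw [← hv]
      · simp [hh, hc] at hv
    refine ⟨D, s, h, hDfin, hDne, ?_, hs, ?_⟩
    · rintro l (hl | ⟨l', v, hv, i, rfl⟩)
      · exact hdomD hl
      · have hc : l' ∈ D ∧ d l' := by
          by_contra hc
          simp [hh, hc] at hv
        rw [← hfv l' v hv i]
        exact hfD l' hc.1 i
    · exact (key_equiv D h d f hdomD hdiff hfv φ s hs).mpr hsat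
end

section
/- For a finite partial function h : U ⇀ U (k=1 heap), a finite set of store values s(X) and a finite set L ⊆ U, define V = L ∪ s(X), V̄ = the closure of V under h (all h-iterates of elements of V), and W = V ∪ { ℓ ∈ V̄ : ℓ has at least two distinct h-predecessors in V̄ }. Then |W \ V| ≤ |V|. -/
def dom1 {L : Type} (h : L → Option L) : Set L := {l | h l ≠ none}

def hIter {L : Type} (h : L → Option L) : ℕ → L → Option L
  | 0, l => some l
  | n + 1, l => (h l).bind (hIter h n)

/-- V̄ : closure of V under iterates of the heap h. -/
def vbar {L : Type} (h : L → Option L) (V : Set L) : Set L :=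
  {l | ∃ l' ∈ V, ∃ i, hIter h i l' = some l}

/-- W : V together with all locations of V̄ having at least two distinct
h-predecessors in V̄. -/
def wset {L : Type} (h : L → Option L) (V : Set L) : Set L :=
  V ∪ {l | l ∈ vbar h V ∧ ∃ a ∈ vbar h V, ∃ b ∈ vbar h V,
        a ≠ b ∧ h a = some l ∧ h b = some l}

lemma hIter_last {L : Type} (h : L → Option L) :
    ∀ (i : ℕ) (l t : L), hIter h (i + 1) l = some t →
      ∃ a, hIter h i l = some a ∧ h a = some t := by
  intro i
  induction i with
  | zero =>
    intro l t ht
    refine ⟨l, rfl, ?_⟩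
    cases hl : h l with
    | none => simp [hIter, hl] at ht
    | some m => simp [hIter, hl] at ht; simp [hl, ht]
  | succ i ih =>
    intro l t ht
    cases hl : h l with
    | none => simp [hIter, hl] at ht
    | some m =>
      simp only [hIter, hl, Option.bind_some] at ht ⊢
      obtain ⟨a, ha, hat⟩ := ih m t ht
      exact ⟨a, ha, hat⟩

/-- with V = L₀ ∪ s(X) (X nonempty), |W \ V| ≤ |V|. -/
theorem wset_card_bound {L : Type} {X : Type} (h : L → Option L)
    (hfin : (dom1 h).Finite)
    (X' : Set X) (hXne : X'.Nonempty) (hXfin : X'.Finite) (s : X → L)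
    (L0 : Set L) (hL0fin : L0.Finite) :
    ((wset h (L0 ∪ s '' X')) \ (L0 ∪ s '' X')).ncard ≤ (L0 ∪ s '' X').ncard := by
  classical
  set V := L0 ∪ s '' X' with hVdef
  have hVfin : V.Finite := hL0fin.union (hXfin.image s)
  have hVsub : V ⊆ vbar h V := fun l hl => ⟨l, hl, 0, rfl⟩
  -- vbar is finite
  have hsub : vbar h V ⊆ V ∪ (Option.some ⁻¹' (h '' dom1 h)) := by
    rintro t ⟨l', hl', i, hit⟩
    cases i with
    | zero =>
      left
      have : l' = t := by simpa [hIter] using hit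
      exact this ▸ hl'
    | succ i =>
      obtain ⟨a, _, hat⟩ := hIter_last h i l' t hit
      right
      exact ⟨a, by simp [dom1, hat], hat⟩
  have hpre : (Option.some ⁻¹' (h '' dom1 h)).Finite :=
    Set.Finite.preimage (Set.injOn_of_injective (Option.some_injective L)) (hfin.image h)
  have hBfin : (vbar h V).Finite := ((hVfin.union hpre)).subset hsub
  have hMfin : (wset h V \ V).Finite := hBfin.subset (by
    rintro t ⟨ht, htV⟩
    rcases ht with h1 | h2
    · exact absurd h1 htV
    · exact h2.1)
  set B := hBfin.toFinset with hB
  set Vf := hVfin.toFinset with hVf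
  set Mf := hMfin.toFinset with hMf
  have hVB : Vf ⊆ B := by
    intro x hx
    simp only [hB, hVf, Set.Finite.mem_toFinset] at *
    exact hVsub hx
  have hMB : Mf ⊆ B \ Vf := by
    intro x hx
    simp only [hMf, hB, hVf, Set.Finite.mem_toFinset, Finset.mem_sdiff] at *
    rcases hx with ⟨hw, hv⟩
    refine ⟨?_, by simpa using hv⟩
    rcases hw with h1 | h2
    · exact absurd h1 hv
    · exact h2.1
  set P : L → Finset L := fun t => B.filter (fun a => h a = some t) with hP
  -- upper bound on total in-degree
  have hdisj : ∀ t1 ∈ B, ∀ t2 ∈ B, t1 ≠ t2 → Disjoint (P t1) (P t2) := by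
    intro t1 _ t2 _ hne
    refine Finset.disjoint_left.mpr fun a ha1 ha2 => ?_
    simp only [hP, Finset.mem_filter] at ha1 ha2
    exact hne (by rw [ha1.2] at ha2; exact Option.some.inj ha2.2)
  have hsumU : ∑ t ∈ B, (P t).card ≤ B.card := by
    rw [← Finset.card_biUnion hdisj]
    exact Finset.card_le_card (Finset.biUnion_subset.mpr fun t _ => Finset.filter_subset _ _)
  -- lower bounds
  have hone : ∀ t ∈ B \ Vf, 1 ≤ (P t).card := by
    intro t ht
    rw [Finset.mem_sdiff, hB, hVf, Set.Finite.mem_toFinset, Set.Finite.mem_toFinset] at ht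
    obtain ⟨⟨l', hl', i, hit⟩, htV⟩ := ht
    cases i with
    | zero =>
      exact absurd (show l' = t by simpa [hIter] using hit) (fun e => htV (e ▸ hl'))
    | succ i =>
      obtain ⟨a, ha, hat⟩ := hIter_last h i l' t hit
      have haB : a ∈ B := by
        rw [hB, Set.Finite.mem_toFinset]; exact ⟨l', hl', i, ha⟩
      exact Finset.card_pos.mpr ⟨a, by simp [hP, haB, hat]⟩
  have htwo : ∀ t ∈ Mf, 2 ≤ (P t).card := by
    intro t ht
    rw [hMf, Set.Finite.mem_toFinset] at ht
    obtain ⟨hw, htV⟩ := ht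
    rcases hw with h1 | h2
    · exact absurd h1 htV
    · obtain ⟨_, a, haV, b, hbV, hab, hat, hbt⟩ := h2
      have : ({a, b} : Finset L) ⊆ P t := by
        intro x hx
        simp only [Finset.mem_insert, Finset.mem_singleton] at hx
        rcases hx with rfl | rfl <;>
          simp [hP, hB, Set.Finite.mem_toFinset, haV, hbV, hat, hbt]
      calc 2 = ({a, b} : Finset L).card := (Finset.card_pair hab).symm
        _ ≤ (P t).card := Finset.card_le_card this
  -- combine
  have hsplit : ∑ t ∈ (B \ Vf) \ Mf, (P t).card + ∑ t ∈ Mf, (P t).card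
      = ∑ t ∈ B \ Vf, (P t).card := Finset.sum_sdiff hMB
  have h1 : ((B \ Vf) \ Mf).card ≤ ∑ t ∈ (B \ Vf) \ Mf, (P t).card := by
    calc ((B \ Vf) \ Mf).card = ∑ _t ∈ (B \ Vf) \ Mf, 1 := by simp
      _ ≤ _ := Finset.sum_le_sum fun t ht => hone t (Finset.sdiff_subset ht)

  have h2 : 2 * Mf.card ≤ ∑ t ∈ Mf, (P t).card := by
    calc 2 * Mf.card = ∑ _t ∈ Mf, 2 := by rw [Finset.sum_const, smul_eq_mul, mul_comm]
      _ ≤ _ := Finset.sum_le_sum htwo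
  have h3 : ∑ t ∈ B \ Vf, (P t).card ≤ ∑ t ∈ B, (P t).card :=
    Finset.sum_le_sum_of_subset (Finset.sdiff_subset)
  have hcards : ((B \ Vf) \ Mf).card = (B \ Vf).card - Mf.card := Finset.card_sdiff_of_subset hMB
  have hMle : Mf.card ≤ (B \ Vf).card := Finset.card_le_card hMB
  have hBV : (B \ Vf).card = B.card - Vf.card := Finset.card_sdiff_of_subset hVB
  have hVle : Vf.card ≤ B.card := Finset.card_le_card hVB
  have key : Mf.card ≤ Vf.card := by omega
  have e1 : (wset h V \ V).ncard = Mf.card := by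
    rw [hMf]; exact Set.ncard_eq_toFinset_card _ hMfin
  have e2 : V.ncard = Vf.card := by
    rw [hVf]; exact Set.ncard_eq_toFinset_card _ hVfin
  rw [e1, e2]
  exact key
end

section
/- For the (X,L)-restriction I' = (V̄, s, h|_{V̄}) of an SL-structure I = (U, s, h) with k=1 (where V̄ is the h-closure of L ∪ s(X)), if |V̄ \ dom(h|_{V̄})| ≤ n and |(L ∪ s(X)) \ dom(h)| = min(|U \ dom(h)|, N+1) for some N ≥ n, then |U \ dom(h)| ≤ n. -/
attribute [local instance] Classical.propDecidable

noncomputable section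

def rHeap {L : Type} (h : L → Option L) (S : Set L) (l : L) : Option L :=
  if l ∈ S then h l else none

/-- for the (X,L)-restriction (V̄, s, h|V̄) of (U, s, h), if
|V̄ \ dom(h|V̄)| ≤ n and |(L₀ ∪ s(X)) \ dom(h)| = min(|U \ dom(h)|, N+1) with
N ≥ n, then |U \ dom(h)| ≤ n. -/
theorem restriction_unalloc_bound {L : Type}
    (U : Set L) (h : L → Option L) (hfin : (dom1 h).Finite)
    (SX L0 : Set L) (hsub : L0 ∪ SX ⊆ U) (hdom : dom1 h ⊆ U)
    (n N : ℕ) (hnN : n ≤ N)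
    (h1 : (vbar h (L0 ∪ SX) \ dom1 (rHeap h (vbar h (L0 ∪ SX)))).encard ≤ n)
    (h2 : ((L0 ∪ SX) \ dom1 h).encard = min (U \ dom1 h).encard ((N : ℕ∞) + 1)) :
    (U \ dom1 h).encard ≤ n := by
  have hsubset : (L0 ∪ SX) \ dom1 h ⊆
      vbar h (L0 ∪ SX) \ dom1 (rHeap h (vbar h (L0 ∪ SX))) := by
    intro l hl
    obtain ⟨hlm, hlnd⟩ := hl
    have hlv : l ∈ vbar h (L0 ∪ SX) := ⟨l, hlm, 0, rfl⟩
    refine ⟨hlv, ?_⟩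
    have hnone : h l = none := by
      by_contra hc; exact hlnd hc
    simp [dom1, rHeap, hlv, hnone]
  have hle : ((L0 ∪ SX) \ dom1 h).encard ≤ n :=
    le_trans (Set.encard_mono hsubset) h1
  rw [h2] at hle
  rcases le_total (U \ dom1 h).encard ((N : ℕ∞) + 1) with hc | hc
  · rwa [min_eq_left hc] at hle
  · rw [min_eq_right hc] at hle
    exfalso
    have hN : ((N : ℕ∞) + 1) ≤ (N : ℕ∞) :=
      le_trans hle (by exact_mod_cast hnN)
    have hlt : (N : ℕ∞) < (N : ℕ∞) + 1 := by
      exact_mod_cast Nat.lt_succ_self N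
    exact absurd (lt_of_lt_of_le hlt hN) (lt_irrefl _)
end
end
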